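/- arXiv:math/0503716 — 3 statements merged into one kernel-verified Lean document; each statement's English description precedes it below -/
import Mathlib

section
/- The pointwise infimum of an arbitrary nonempty family of distance-like functions on a metric space, if finite everywhere, is distance-like. -/
open Filter Topology Metric

noncomputable section

/-- A function `f : X → ℝ` is distance-like (Gromov) if for every `x` and every
`t ≤ f x`, the distance from `x` to the sublevel set `L_t = {y | f y ≤ t}` equals
`f x - t`. -/
def DistanceLike {X : Type*} [MetricSpace X] (f : X → ℝ) : Prop :=
  ∀ x t, t ≤ f x → sInf (dist x '' {y | f y ≤ t}) = f x - t

/-- A geodesic metric space: any two points are joined by a geodesic segment. -/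
def IsGeodesicSpace (X : Type*) [MetricSpace X] : Prop :=
  ∀ x y : X, ∃ γ : ℝ → X, γ 0 = x ∧ γ (dist x y) = y ∧
    ∀ s ∈ Set.Icc (0 : ℝ) (dist x y), ∀ t ∈ Set.Icc (0 : ℝ) (dist x y),
      dist (γ s) (γ t) = |s - t|

/-!
A function is distance-like exactly when it is `1`-Lipschitz and every `x` with `t ≤ f x` can
be joined to the sublevel set `{f ≤ t}` at cost arbitrarily close to `f x - t`. Both properties
pass to a pointwise infimum: the Lipschitz bound survives infima, and a near-optimal `f α` at `x`
provides near-optimal points, since `{f α ≤ t} ⊆ {⨅ α, f α ≤ t}`.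
-/

theorem LipschitzWith.ciInf {X ι : Type*} [PseudoMetricSpace X] [Nonempty ι] {K : NNReal}
    {f : ι → X → ℝ} (hf : ∀ i, LipschitzWith K (f i))
    (hbd : ∀ x, BddBelow (Set.range fun i => f i x)) :
    LipschitzWith K fun x => ⨅ i, f i x :=
  LipschitzWith.of_le_add_mul K fun x y => by
    have h : ∀ i, (⨅ i, f i x) - K * dist x y ≤ f i y := fun i => by
      linarith [ciInf_le (hbd x) i, (hf i).le_add_mul x y]
    linarith [le_ciInf h]

namespace DistanceLike

variable {X : Type*} [MetricSpace X] {f : X → ℝ}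

theorem nonempty_sublevel (hf : DistanceLike f) {x : X} {t : ℝ} (ht : t ≤ f x) :
    {y | f y ≤ t}.Nonempty := by
  rcases ht.eq_or_lt with rfl | hlt
  · exact ⟨x, le_refl (f x)⟩
  by_contra hempty
  have hdist := hf x t ht
  rw [Set.not_nonempty_iff_eq_empty.mp hempty, Set.image_empty, Real.sInf_empty] at hdist
  linarith

theorem exists_dist_lt (hf : DistanceLike f) {x : X} {t w : ℝ} (ht : t ≤ f x)
    (hw : f x - t < w) : ∃ y, f y ≤ t ∧ dist x y < w := by
  rw [← hf x t ht] at hw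
  obtain ⟨_, ⟨y, hy, rfl⟩, hlt⟩ :=
    exists_lt_of_csInf_lt ((hf.nonempty_sublevel ht).image _) hw
  exact ⟨y, hy, hlt⟩

theorem lipschitzWith (hf : DistanceLike f) : LipschitzWith 1 f :=
  LipschitzWith.of_le_add fun x y => by
    rcases le_or_gt (f x) (f y) with hle | hlt
    · linarith [dist_nonneg (x := x) (y := y)]
    have hbdd : BddBelow (dist x '' {z | f z ≤ f y}) :=
      ⟨0, by rintro _ ⟨z, -, rfl⟩; exact dist_nonneg⟩
    have hy : sInf (dist x '' {z | f z ≤ f y}) ≤ dist x y :=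
      csInf_le hbdd ⟨y, le_refl (f y), rfl⟩
    linarith [hf x (f y) hlt.le]

theorem of_lipschitzWith (hlip : LipschitzWith 1 f)
    (hnear : ∀ x t, t ≤ f x → ∀ w, f x - t < w → ∃ y, f y ≤ t ∧ dist x y < w) :
    DistanceLike f := by
  intro x t ht
  obtain ⟨y, hy, -⟩ := hnear x t ht _ (lt_add_one _)
  refine csInf_eq_of_forall_ge_of_forall_gt_exists_lt ⟨_, y, hy, rfl⟩ ?_ ?_
  · rintro _ ⟨z, hz, rfl⟩
    have hxz := hlip.le_add_mul x z
    simp only [NNReal.coe_one, one_mul] at hxz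
    linarith [show f z ≤ t from hz]
  · intro w hw
    obtain ⟨z, hz, hlt⟩ := hnear x t ht w hw
    exact ⟨_, ⟨z, hz, rfl⟩, hlt⟩

end DistanceLike

/-- the pointwise infimum of a nonempty family of distance-like
functions, if finite everywhere, is distance-like. -/
theorem distanceLike_iInf {X : Type*} [MetricSpace X] {I : Type*} [Nonempty I]
    (f : I → X → ℝ) (hf : ∀ α, DistanceLike (f α))
    (hbd : ∀ x, BddBelow (Set.range fun α => f α x)) :
    DistanceLike (fun x => ⨅ α, f α x) := by
  have hle : ∀ α x, ⨅ β, f β x ≤ f α x := fun α x => ciInf_le (hbd x) α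
  refine DistanceLike.of_lipschitzWith
    (LipschitzWith.ciInf (fun α => (hf α).lipschitzWith) hbd) ?_
  intro x t ht w hw
  obtain ⟨α, hα⟩ := exists_lt_of_ciInf_lt (show ⨅ α, f α x < w + t by linarith)
  obtain ⟨y, hy, hxy⟩ :=
    (hf α).exists_dist_lt (ht.trans (hle α x)) (show f α x - t < w by linarith)
  exact ⟨y, (hle α y).trans hy, hxy⟩
end
end

section
/- Let f be a distance-like function on a metric space (X,d), let x₀ ∈ X, let ε > 0, and let (ε_n) be positive reals with Σ ε_n < ε. Then there exists a sequence (x_n) in X with f(x_{n+1}) ≤ f(x_n) - 1 and 1 ≤ d(x_n, x_{n+1}) < 1 + ε_n for all n; consequently Σ_{i=0}^{n-1} d(x_i, x_{i+1}) ≤ f(x_0) - f(x_n) + ε for all n. -/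
open Filter Topology Metric

noncomputable section

/-- construction of an almost-geodesic sequence for a distance-like
function, with controlled total length. -/
theorem distanceLike_almost_geodesic {X : Type*} [MetricSpace X] (f : X → ℝ)
    (hf : DistanceLike f) (x₀ : X) (ε : ℝ) (hε : 0 < ε)
    (e : ℕ → ℝ) (he : ∀ n, 0 < e n) (hsum : Summable e) (hlt : ∑' n, e n < ε) :
    ∃ x : ℕ → X, x 0 = x₀ ∧
      (∀ n, f (x (n + 1)) ≤ f (x n) - 1) ∧
      (∀ n, 1 ≤ dist (x n) (x (n + 1)) ∧ dist (x n) (x (n + 1)) < 1 + e n) ∧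
      (∀ n, ∑ i ∈ Finset.range n, dist (x i) (x (i + 1)) ≤ f x₀ - f (x n) + ε) := by
  -- Key step lemma
  have key : ∀ (p : X) (δ : ℝ), 0 < δ →
      ∃ y, f y ≤ f p - 1 ∧ 1 ≤ dist p y ∧ dist p y < 1 + δ := by
    intro p δ hδ
    have ht : f p - 1 ≤ f p := by linarith
    have h := hf p (f p - 1) ht
    have h1 : sInf (dist p '' {y | f y ≤ f p - 1}) = 1 := by rw [h]; ring
    have hne : (dist p '' {y | f y ≤ f p - 1}).Nonempty := by
      by_contra hc
      rw [Set.not_nonempty_iff_eq_empty] at hc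
      rw [hc, Real.sInf_empty] at h1
      norm_num at h1
    have hbdd : BddBelow (dist p '' {y | f y ≤ f p - 1}) := by
      refine ⟨0, ?_⟩
      rintro d ⟨y, _, rfl⟩
      exact dist_nonneg
    have hlt1 : sInf (dist p '' {y | f y ≤ f p - 1}) < 1 + δ := by
      rw [h1]; linarith
    obtain ⟨d, ⟨y, hy, rfl⟩, hd⟩ := (csInf_lt_iff hbdd hne).1 hlt1
    refine ⟨y, hy, ?_, hd⟩
    have := csInf_le hbdd (Set.mem_image_of_mem _ hy)
    rw [h1] at this
    exact this
  -- recursive construction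
  let x : ℕ → X := fun n => Nat.rec x₀ (fun n p => (key p (e n) (he n)).choose) n
  have hx0 : x 0 = x₀ := rfl
  have hstep : ∀ n, f (x (n+1)) ≤ f (x n) - 1 ∧ 1 ≤ dist (x n) (x (n+1)) ∧
      dist (x n) (x (n+1)) < 1 + e n := fun n => (key (x n) (e n) (he n)).choose_spec
  have hdec : ∀ n, f (x n) ≤ f x₀ - n := by
    intro n
    induction n with
    | zero => simp [hx0]
    | succ n ih =>
      have := (hstep n).1
      push_cast
      linarith
  refine ⟨x, hx0, fun n => (hstep n).1, fun n => (hstep n).2, ?_⟩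
  intro n
  have hsum1 : ∑ i ∈ Finset.range n, dist (x i) (x (i+1)) ≤
      ∑ i ∈ Finset.range n, (1 + e i) := by
    apply Finset.sum_le_sum
    intro i _
    exact le_of_lt (hstep i).2.2
  have hsum2 : ∑ i ∈ Finset.range n, (1 + e i) = n + ∑ i ∈ Finset.range n, e i := by
    rw [Finset.sum_add_distrib]
    simp
  have hsum3 : ∑ i ∈ Finset.range n, e i ≤ ∑' i, e i :=
    Summable.sum_le_tsum _ (fun i _ => (he i).le) hsum
  have := hdec n
  calc ∑ i ∈ Finset.range n, dist (x i) (x (i+1)) ≤ n + ∑ i ∈ Finset.range n, e i := by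
        rw [← hsum2]; exact hsum1
    _ ≤ n + ε := by linarith
    _ ≤ f x₀ - f (x n) + ε := by linarith
end
end

section
/- Consider S = {1, 2, 3, …} ∪ {∞} with kernel A_{ij} = 1/i - 1/j if j ≤ i and j < ∞, A_{1∞} = -1, and A_{ij} = -∞ otherwise (using 1/∞ = 0). With basepoint ∞, the Martin kernel is K_{ij} = 1/i if j ≤ i, and K_{ij} = 1/i - 2 otherwise. -/
open Filter Topology
open scoped Classical

noncomputable section

variable {S : Type*}

/-- Weight of the path `i :: p ++ [j]` (length ≥ 1): sum of the kernel values along edges. -/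
def pathWeight (A : S → S → EReal) : S → List S → S → EReal
  | i, [], j => A i j
  | i, k :: l, j => A i k + pathWeight A k l j

/-- Max-plus kernel `A⁺`: sup of weights of paths of length at least one. -/
def Aplus (A : S → S → EReal) (i j : S) : EReal :=
  ⨆ p : List S, pathWeight A i p j

/-- Max-plus Green kernel `A*`: also allows the empty path (weight 0) when `i = j`. -/
def Astar (A : S → S → EReal) (i j : S) : EReal :=
  if i = j then Aplus A i j ⊔ 0 else Aplus A i j

/-- `1/i` on `ℕ₊ ∪ {∞}`, with `1/∞ = 0`. -/
def inv13 (i : WithTop ℕ+) : ℝ :=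
  WithTop.recTopCoe 0 (fun n : ℕ+ => 1 / (n : ℝ)) i

/-- The kernel on `S = ℕ₊ ∪ {∞}`: `A i j = 1/i - 1/j` if `j ≤ i` and `j < ∞`,
`A 1 ∞ = -1`, and `-∞` otherwise. -/
def A13 : WithTop ℕ+ → WithTop ℕ+ → EReal := fun i j =>
  if j ≤ i ∧ j ≠ ⊤ then ((inv13 i - inv13 j : ℝ) : EReal)
  else if i = ((1 : ℕ+) : WithTop ℕ+) ∧ j = ⊤ then (-1 : EReal)
  else ⊥

/-!
The closed form `G i j = 1/i - 1/j - 2·[¬ j ≤ i]` satisfies `G i i = 0` and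
`A i k + G k j ≤ G i j`, so by induction on paths it dominates `A*`. Conversely it is
attained: by the empty path when `i = j`, by the edge `i → j` when `j ≤ i`, and otherwise
by the detour `i → 1 → ∞ (→ j)`. Hence `K i j = G i j - G ∞ j = 1/i - 2·[¬ j ≤ i]`.
-/

theorem pathWeight_le_Astar (A : S → S → EReal) (i : S) (p : List S) (j : S) :
    pathWeight A i p j ≤ Astar A i j := by
  unfold Astar
  split_ifs
  · exact le_sup_of_le_left (le_iSup (pathWeight A i · j) p)
  · exact le_iSup (pathWeight A i · j) p

theorem zero_le_Astar_self (A : S → S → EReal) (i : S) : 0 ≤ Astar A i i := by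
  simp [Astar]

theorem Astar_le_of_forall_add_le {A B : S → S → EReal} (hB : ∀ i, 0 ≤ B i i)
    (h : ∀ i k j, A i k + B k j ≤ B i j) (i j : S) : Astar A i j ≤ B i j := by
  have hpath : ∀ p i, pathWeight A i p j ≤ B i j := by
    intro p
    induction p with
    | nil => exact fun i => (le_add_of_nonneg_right (hB j)).trans (h i j j)
    | cons k p ih => exact fun i => (add_le_add_right (ih k) _).trans (h i k j)
  have hAplus : Aplus A i j ≤ B i j := iSup_le fun p => hpath p i
  unfold Astar
  split_ifs with hij
  · subst hij
    exact sup_le hAplus (hB i)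
  · exact hAplus

theorem inv13_top : inv13 ⊤ = 0 := rfl

theorem inv13_one : inv13 ((1 : ℕ+) : WithTop ℕ+) = 1 := by
  rw [inv13, WithTop.recTopCoe_coe, PNat.one_coe, Nat.cast_one, div_one]

theorem one_le_withTop_pnat (i : WithTop ℕ+) : ((1 : ℕ+) : WithTop ℕ+) ≤ i :=
  bot_le (a := i)

theorem A13_of_le {i j : WithTop ℕ+} (hji : j ≤ i) (hj : j ≠ ⊤) :
    A13 i j = ((inv13 i - inv13 j : ℝ) : EReal) := by
  simp [A13, hji, hj]

theorem A13_one_top : A13 ((1 : ℕ+) : WithTop ℕ+) ⊤ = ((-1 : ℝ) : EReal) := by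
  simp [A13]

def greenA13 (i j : WithTop ℕ+) : ℝ :=
  inv13 i - inv13 j - if j ≤ i then 0 else 2

theorem greenA13_self (i : WithTop ℕ+) : greenA13 i i = 0 := by
  simp [greenA13]

theorem A13_add_greenA13_le (i k j : WithTop ℕ+) :
    A13 i k + (greenA13 k j : EReal) ≤ (greenA13 i j : EReal) := by
  unfold A13
  split_ifs with hki hedge
  · rw [← EReal.coe_add, EReal.coe_le_coe_iff]
    unfold greenA13
    by_cases hjk : j ≤ k
    · simp only [hjk, hjk.trans hki.1, if_true]
      linarith
    · split_ifs <;> linarith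
  · obtain ⟨rfl, rfl⟩ := hedge
    rw [show (-1 : EReal) = ((-1 : ℝ) : EReal) by norm_num, ← EReal.coe_add,
      EReal.coe_le_coe_iff]
    unfold greenA13
    simp only [inv13_one, inv13_top, le_top, if_true]
    split_ifs <;> linarith
  · simp

theorem Astar_A13_le_greenA13 (i j : WithTop ℕ+) : Astar A13 i j ≤ (greenA13 i j : EReal) :=
  Astar_le_of_forall_add_le (B := fun i j => (greenA13 i j : EReal))
    (fun i => by simp [greenA13_self]) A13_add_greenA13_le i j

theorem greenA13_le_Astar_A13 (i j : WithTop ℕ+) : (greenA13 i j : EReal) ≤ Astar A13 i j := by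
  have hA1 : A13 i ((1 : ℕ+) : WithTop ℕ+) = ((inv13 i - 1 : ℝ) : EReal) := by
    rw [A13_of_le (one_le_withTop_pnat i) WithTop.coe_ne_top, inv13_one]
  by_cases hij : i = j
  · subst hij
    simpa [greenA13_self] using zero_le_Astar_self A13 i
  by_cases hji : j ≤ i
  · have hj : j ≠ ⊤ := fun h => hij ((top_le_iff.mp (h ▸ hji)).trans h.symm)
    refine le_of_eq_of_le ?_ (pathWeight_le_Astar A13 i [] j)
    simp [pathWeight, A13_of_le hji hj, greenA13, hji]
  by_cases hj : j = ⊤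
  · subst hj
    -- the only way into `⊤` is the edge `1 → ⊤`
    refine le_of_eq_of_le ?_ (pathWeight_le_Astar A13 i [(1 : ℕ+)] ⊤)
    simp only [pathWeight, hA1, A13_one_top, greenA13, hji, if_false, inv13_top]
    rw [← EReal.coe_add, EReal.coe_eq_coe_iff]
    ring
  · refine le_of_eq_of_le ?_ (pathWeight_le_Astar A13 i [(1 : ℕ+), ⊤] j)
    simp only [pathWeight, hA1, A13_one_top, A13_of_le le_top hj, greenA13, hji, if_false,
      inv13_top]
    rw [← EReal.coe_add, ← EReal.coe_add, EReal.coe_eq_coe_iff]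
    ring

theorem Astar_A13 (i j : WithTop ℕ+) : Astar A13 i j = (greenA13 i j : EReal) :=
  le_antisymm (Astar_A13_le_greenA13 i j) (greenA13_le_Astar_A13 i j)

/-- with basepoint `∞`, the Martin kernel is `K i j = 1/i` if
`j ≤ i`, and `K i j = 1/i - 2` otherwise. -/
theorem martin_kernel_A13 :
    ∀ i j : WithTop ℕ+,
      Astar A13 i j - Astar A13 ⊤ j =
        if j ≤ i then ((inv13 i : ℝ) : EReal) else ((inv13 i - 2 : ℝ) : EReal) := by
  intro i j
  rw [Astar_A13, Astar_A13, ← EReal.coe_sub]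
  simp only [greenA13, inv13_top, le_top, if_true]
  split_ifs <;> rw [EReal.coe_eq_coe_iff] <;> ring
end
end
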